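/- arXiv:1409.8396 — 2 statements merged into one kernel-verified Lean document; each statement's English description precedes it below -/
import Mathlib

section
/- Let Q be a medial quandle with finite orbits such that for every orbit A there exists an orbit B with |A| and |B| coprime. Then Q is 2-reductive, i.e., (x·y)·y = y for all x,y ∈ Q. -/
/-- The set of left translations of a binary algebra `(Q, op)`, viewed as permutations:
permutations `f` such that `f x = op a x` for some `a`. -/
def translations {Q : Type*} (op : Q → Q → Q) : Set (Equiv.Perm Q) :=
  { f | ∃ a : Q, ∀ x : Q, f x = op a x }

/-- The (left) multiplication group `LMlt(Q)`: the subgroup of the symmetric group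
generated by the left translations. -/
def LMlt {Q : Type*} (op : Q → Q → Q) : Subgroup (Equiv.Perm Q) :=
  Subgroup.closure (translations op)

/-- The displacement group `Dis(Q)`: the subgroup generated by all `L_a * L_b⁻¹`. -/
def Dis {Q : Type*} (op : Q → Q → Q) : Subgroup (Equiv.Perm Q) :=
  Subgroup.closure { f | ∃ g ∈ translations op, ∃ h ∈ translations op, f = g * h⁻¹ }

/-- `(Q, op)` is a quandle: idempotent, left distributive, left quasigroup. -/
def IsQuandle {Q : Type*} (op : Q → Q → Q) : Prop :=
  (∀ x, op x x = x) ∧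
  (∀ x y z, op x (op y z) = op (op x y) (op x z)) ∧
  (∀ x y, ∃! u, op x u = y)

/-- `(Q, op)` is medial. -/
def IsMedial {Q : Type*} (op : Q → Q → Q) : Prop :=
  ∀ x y u v, op (op x y) (op u v) = op (op x u) (op y v)

/-- The orbit of `e` under the multiplication group. -/
def qOrbit {Q : Type*} (op : Q → Q → Q) (e : Q) : Set Q :=
  { y | ∃ f ∈ LMlt op, f e = y }

/-- The orbit of `e` under the displacement group. -/
def disOrbit {Q : Type*} (op : Q → Q → Q) (e : Q) : Set Q :=
  { y | ∃ f ∈ Dis op, f e = y }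

/-!
Mediality makes the displacement group `Dis(Q) = ⟨L_a L_b⁻¹⟩` abelian, and its orbits are those
of `LMlt(Q)`, because `L_a z = (L_a L_z⁻¹) z` and `Dis(Q)` is normal in `LMlt(Q)`. In an abelian
group the stabiliser of `e` is normal of index `|Qe|`, so `g ^ |Qe|` fixes `e` for `g ∈ Dis(Q)`.

Given `x, y`, put `d = L_y L_x⁻¹` and `h = [L_x, d] ∈ Dis(Q)`; then `L_{xy} = h L_y`, so
`(x·y)·y = h y`. Choose `f` with `|Qy|` and `|Qf|` coprime. Then `h ^ |Qy|` fixes `y`. On the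
other hand `d ^ |Qf|` fixes `f`, hence commutes with `L_f`, and with `L_x L_f⁻¹ ∈ Dis(Q)`, hence
with `L_x`; therefore `h ^ |Qf| = [L_x, d ^ |Qf|] = 1`, and coprimality gives `h y = y`.
-/

open scoped commutatorElement

theorem MulAction.pow_ncard_orbit_smul {G α : Type*} [Group G] [IsMulCommutative G]
    [MulAction G α] (g : G) (a : α) : g ^ (orbit G a).ncard • a = a := by
  rw [← index_stabilizer]
  exact (stabilizer G a).pow_index_mem g

theorem MulAction.smul_eq_of_pow_smul_eq_of_pow_eq_one {G α : Type*} [Group G] [MulAction G α]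
    {g : G} {a : α} {m k : ℕ} (hmk : m.Coprime k) (hm : g ^ m • a = a) (hk : g ^ k = 1) :
    g • a = a := by
  have hg : g ∈ Subgroup.zpowers (g ^ m) :=
    mem_zpowers_pow_iff.2 (hmk.coprime_dvd_right (orderOf_dvd_of_pow_eq_one hk))
  exact Subgroup.zpowers_le.2 (mem_stabilizer_iff.2 hm) hg

theorem commutatorElement_pow_eq_one {G : Type*} [Group G] {a b : G} {k : ℕ}
    (hconj : Commute (a * b * a⁻¹) b) (hk : Commute a (b ^ k)) : ⁅a, b⁆ ^ k = 1 := by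
  rw [commutatorElement_def, hconj.inv_right.mul_pow, ← MulAut.conj_apply, ← map_pow,
    MulAut.conj_apply, inv_pow, hk.eq]
  group

theorem Dis_le_LMlt {Q : Type*} (op : Q → Q → Q) : Dis op ≤ LMlt op := by
  rw [Dis, Subgroup.closure_le]
  rintro f ⟨g, hg, h, hh, rfl⟩
  exact mul_mem (Subgroup.subset_closure hg) (inv_mem (Subgroup.subset_closure hh))

namespace IsQuandle

variable {Q : Type*} {op : Q → Q → Q}

noncomputable def leftMul (hQ : IsQuandle op) (a : Q) : Equiv.Perm Q :=
  Equiv.ofBijective (op a)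
    ⟨fun _ v huv => (hQ.2.2 a (op a v)).unique huv rfl, fun y => (hQ.2.2 a y).exists⟩

theorem leftMul_self_apply (hQ : IsQuandle op) (a : Q) : hQ.leftMul a a = a := hQ.1 a

theorem mem_translations_iff (hQ : IsQuandle op) {f : Equiv.Perm Q} :
    f ∈ translations op ↔ ∃ a, f = hQ.leftMul a :=
  ⟨fun ⟨a, ha⟩ => ⟨a, Equiv.ext ha⟩, fun ⟨a, hf⟩ => ⟨a, fun x => by rw [hf]; rfl⟩⟩

theorem leftMul_mem_LMlt (hQ : IsQuandle op) (a : Q) : hQ.leftMul a ∈ LMlt op :=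
  Subgroup.subset_closure (hQ.mem_translations_iff.2 ⟨a, rfl⟩)

theorem leftMul_mul_inv_mem_Dis (hQ : IsQuandle op) (a b : Q) :
    hQ.leftMul a * (hQ.leftMul b)⁻¹ ∈ Dis op :=
  Subgroup.subset_closure ⟨_, hQ.mem_translations_iff.2 ⟨a, rfl⟩,
    _, hQ.mem_translations_iff.2 ⟨b, rfl⟩, rfl⟩

theorem leftMul_op (hQ : IsQuandle op) (a b : Q) :
    hQ.leftMul (op a b) = hQ.leftMul a * hQ.leftMul b * (hQ.leftMul a)⁻¹ := by
  rw [eq_mul_inv_iff_mul_eq]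
  ext z
  exact (hQ.2.1 a b z).symm

theorem mul_leftMul_mul_inv (hQ : IsQuandle op) {g : Equiv.Perm Q} (hg : g ∈ LMlt op) (b : Q) :
    g * hQ.leftMul b * g⁻¹ = hQ.leftMul (g b) := by
  induction hg using Subgroup.closure_induction generalizing b with
  | mem f hf =>
    obtain ⟨a, rfl⟩ := hQ.mem_translations_iff.1 hf
    exact (hQ.leftMul_op a b).symm
  | one => simp
  | mul x y _ _ hx hy =>
    rw [show x * y * hQ.leftMul b * (x * y)⁻¹ = x * (y * hQ.leftMul b * y⁻¹) * x⁻¹ by group,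
      hy, hx]
    rfl
  | inv x _ hx =>
    obtain ⟨c, rfl⟩ := x.surjective b
    rw [← hx c]
    simp only [Equiv.Perm.coe_inv, Equiv.symm_apply_apply]
    group

theorem mul_mul_inv_mem_Dis (hQ : IsQuandle op) {g d : Equiv.Perm Q} (hg : g ∈ LMlt op)
    (hd : d ∈ Dis op) : g * d * g⁻¹ ∈ Dis op := by
  induction hd using Subgroup.closure_induction with
  | mem f hf =>
    obtain ⟨s, hs, t, ht, rfl⟩ := hf
    obtain ⟨a, rfl⟩ := hQ.mem_translations_iff.1 hs
    obtain ⟨b, rfl⟩ := hQ.mem_translations_iff.1 ht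
    rw [show g * (hQ.leftMul a * (hQ.leftMul b)⁻¹) * g⁻¹
        = (g * hQ.leftMul a * g⁻¹) * (g * hQ.leftMul b * g⁻¹)⁻¹ by group,
      hQ.mul_leftMul_mul_inv hg, hQ.mul_leftMul_mul_inv hg]
    exact hQ.leftMul_mul_inv_mem_Dis _ _
  | one => simp [one_mem]
  | mul x y _ _ hx hy =>
    rw [show g * (x * y) * g⁻¹ = (g * x * g⁻¹) * (g * y * g⁻¹) by group]
    exact mul_mem hx hy
  | inv x _ hx =>
    rw [show g * x⁻¹ * g⁻¹ = (g * x * g⁻¹)⁻¹ by group]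
    exact inv_mem hx

theorem mem_disOrbit_of_mem_LMlt (hQ : IsQuandle op) {g : Equiv.Perm Q} (hg : g ∈ LMlt op)
    (z : Q) : g z ∈ disOrbit op z := by
  induction hg using Subgroup.closure_induction generalizing z with
  | mem f hf =>
    obtain ⟨a, rfl⟩ := hQ.mem_translations_iff.1 hf
    refine ⟨_, hQ.leftMul_mul_inv_mem_Dis a z, ?_⟩
    rw [Equiv.Perm.mul_apply, Equiv.Perm.inv_eq_iff_eq.2 (hQ.leftMul_self_apply z).symm]
  | one => exact ⟨1, one_mem _, rfl⟩
  | mul x y hx _ ihx ihy =>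
    obtain ⟨d, hd, hdz⟩ := ihy z
    obtain ⟨d', hd', hd'z⟩ := ihx z
    refine ⟨x * d * x⁻¹ * d', mul_mem (hQ.mul_mul_inv_mem_Dis hx hd) hd', ?_⟩
    simp only [Equiv.Perm.mul_apply, hd'z, Equiv.Perm.coe_inv, Equiv.symm_apply_apply, hdz]
  | inv x _ ih =>
    obtain ⟨d, hd, hdz⟩ := ih (x⁻¹ z)
    simp only [Equiv.Perm.coe_inv, Equiv.apply_symm_apply] at hdz
    exact ⟨d⁻¹, inv_mem hd, Equiv.Perm.inv_eq_iff_eq.2 hdz.symm⟩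

theorem qOrbit_eq_disOrbit (hQ : IsQuandle op) (e : Q) : qOrbit op e = disOrbit op e := by
  ext z
  constructor
  · rintro ⟨g, hg, rfl⟩
    exact hQ.mem_disOrbit_of_mem_LMlt hg e
  · rintro ⟨d, hd, rfl⟩
    exact ⟨d, Dis_le_LMlt op hd, rfl⟩

end IsQuandle

namespace IsMedial

variable {Q : Type*} {op : Q → Q → Q}

theorem leftMul_mul_inv_mul_comm (hM : IsMedial op) (hQ : IsQuandle op) (x y u : Q) :
    hQ.leftMul y * (hQ.leftMul x)⁻¹ * hQ.leftMul u
      = hQ.leftMul u * (hQ.leftMul x)⁻¹ * hQ.leftMul y := by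
  have h : hQ.leftMul (op x y) * hQ.leftMul u = hQ.leftMul (op x u) * hQ.leftMul y :=
    Equiv.ext (hM x y u)
  rw [hQ.leftMul_op, hQ.leftMul_op] at h
  simpa only [mul_assoc, mul_right_inj] using h

theorem commute_leftMul_mul_inv (hM : IsMedial op) (hQ : IsQuandle op) (a b c d : Q) :
    Commute (hQ.leftMul a * (hQ.leftMul b)⁻¹) (hQ.leftMul c * (hQ.leftMul d)⁻¹) := by
  set A := hQ.leftMul a; set B := hQ.leftMul b; set C := hQ.leftMul c; set D := hQ.leftMul d
  have hABC : A * B⁻¹ * C = C * B⁻¹ * A := hM.leftMul_mul_inv_mul_comm hQ b a c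
  have hBAD : B⁻¹ * A * D⁻¹ = D⁻¹ * A * B⁻¹ := by
    have hADB : A * D⁻¹ * B = B * D⁻¹ * A := hM.leftMul_mul_inv_mul_comm hQ d a b
    calc B⁻¹ * A * D⁻¹ = B⁻¹ * (A * D⁻¹ * B) * B⁻¹ := by group
      _ = B⁻¹ * (B * D⁻¹ * A) * B⁻¹ := by rw [hADB]
      _ = D⁻¹ * A * B⁻¹ := by group
  calc A * B⁻¹ * (C * D⁻¹) = (A * B⁻¹ * C) * D⁻¹ := by group
    _ = C * (B⁻¹ * A * D⁻¹) := by rw [hABC]; group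
    _ = C * D⁻¹ * (A * B⁻¹) := by rw [hBAD]; group

theorem isMulCommutative_Dis (hM : IsMedial op) (hQ : IsQuandle op) :
    IsMulCommutative (Dis op) := by
  refine Subgroup.isMulCommutative_closure ?_
  rintro _ ⟨s, hs, t, ht, rfl⟩ _ ⟨s', hs', t', ht', rfl⟩
  obtain ⟨a, rfl⟩ := hQ.mem_translations_iff.1 hs
  obtain ⟨b, rfl⟩ := hQ.mem_translations_iff.1 ht
  obtain ⟨c, rfl⟩ := hQ.mem_translations_iff.1 hs'
  obtain ⟨d, rfl⟩ := hQ.mem_translations_iff.1 ht'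
  exact hM.commute_leftMul_mul_inv hQ a b c d

theorem commute_of_mem_Dis (hM : IsMedial op) (hQ : IsQuandle op) {g h : Equiv.Perm Q}
    (hg : g ∈ Dis op) (hh : h ∈ Dis op) : Commute g h :=
  have := hM.isMulCommutative_Dis hQ
  setLike_mul_comm hg hh

theorem commute_leftMul_of_mem_Dis_of_apply_eq (hM : IsMedial op) (hQ : IsQuandle op)
    {d : Equiv.Perm Q} (hd : d ∈ Dis op) {f : Q} (hdf : d f = f) (x : Q) :
    Commute (hQ.leftMul x) d := by
  have hf : Commute d (hQ.leftMul f) := by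
    refine mul_inv_eq_iff_eq_mul.1 ?_
    rw [hQ.mul_leftMul_mul_inv (Dis_le_LMlt op hd), hdf]
  simpa using (hM.commute_of_mem_Dis hQ (hQ.leftMul_mul_inv_mem_Dis x f) hd).mul_left hf.symm

theorem pow_ncard_qOrbit_apply (hM : IsMedial op) (hQ : IsQuandle op) {d : Equiv.Perm Q}
    (hd : d ∈ Dis op) (e : Q) : (d ^ (qOrbit op e).ncard) e = e := by
  have := hM.isMulCommutative_Dis hQ
  have horbit : MulAction.orbit (Dis op) e = qOrbit op e := by
    rw [hQ.qOrbit_eq_disOrbit]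
    ext z
    simp [MulAction.mem_orbit_iff, disOrbit, Subgroup.smul_def]
  simpa [← horbit, Subgroup.smul_def] using MulAction.pow_ncard_orbit_smul (⟨d, hd⟩ : Dis op) e

end IsMedial

theorem two_reductive_of_pairwise_coprime_general {Q : Type*} (op : Q → Q → Q)
    (hQ : IsQuandle op) (hM : IsMedial op)
    (hcop : ∀ e : Q, ∃ f : Q, Nat.Coprime (qOrbit op e).ncard (qOrbit op f).ncard) :
    ∀ x y : Q, op (op x y) y = y := by
  intro x y
  obtain ⟨f, hyf⟩ := hcop y
  set L := hQ.leftMul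
  set d := L y * (L x)⁻¹
  have hd : d ∈ Dis op := hQ.leftMul_mul_inv_mem_Dis y x
  have hconj : L x * d * (L x)⁻¹ ∈ Dis op := hQ.mul_mul_inv_mem_Dis (hQ.leftMul_mem_LMlt x) hd
  have hh : ⁅L x, d⁆ ∈ Dis op := mul_mem hconj (inv_mem hd)
  have hdf : Commute (L x) (d ^ (qOrbit op f).ncard) :=
    hM.commute_leftMul_of_mem_Dis_of_apply_eq hQ (pow_mem hd _)
      (hM.pow_ncard_qOrbit_apply hQ hd f) x
  have hk : ⁅L x, d⁆ ^ (qOrbit op f).ncard = 1 :=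
    commutatorElement_pow_eq_one (hM.commute_of_mem_Dis hQ hconj hd) hdf
  have hfix : ⁅L x, d⁆ y = y :=
    MulAction.smul_eq_of_pow_smul_eq_of_pow_eq_one hyf (hM.pow_ncard_qOrbit_apply hQ hh y) hk
  have hLxy : L (op x y) = ⁅L x, d⁆ * L y := by
    simp only [L, d, hQ.leftMul_op, commutatorElement_def]
    group
  calc op (op x y) y = L (op x y) y := rfl
    _ = ⁅L x, d⁆ y := by rw [hLxy, Equiv.Perm.mul_apply, hQ.leftMul_self_apply]
    _ = y := hfix

/-- Corollary 6.9: a medial quandle with finite orbits, such that every orbit has an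
orbit of coprime size, is 2-reductive. -/
theorem two_reductive_of_pairwise_coprime {Q : Type*} (op : Q → Q → Q)
    (hQ : IsQuandle op) (hM : IsMedial op)
    (hfin : ∀ e : Q, (qOrbit op e).Finite)
    (hcop : ∀ e : Q, ∃ f : Q, Nat.Coprime (qOrbit op e).ncard (qOrbit op f).ncard) :
    ∀ x y : Q, op (op x y) y = y :=
  two_reductive_of_pairwise_coprime_general op hQ hM hcop
end

section
/- Let ((A_i)_{i∈I}; φ_{i,j}; c_{i,j}) be an indecomposable affine mesh over a set I and let n ≥ 1. Then the sum of the mesh is n-symmetric if and only if for every i ∈ I the endomorphism Σ_{r=0}^{n−1} (1 − φ_{i,i})^r of A_i is the zero map. -/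
/-- An affine mesh over an index set `I`: abelian groups `A i`, homomorphisms
`φ i j : A i →+ A j`, and constants `c i j ∈ A j`, satisfying (M1)–(M4). -/
structure AffineMesh (I : Type*) (A : I → Type*) [∀ i, AddCommGroup (A i)] where
  φ : ∀ i j : I, A i →+ A j
  c : ∀ i j : I, A j
  m1 : ∀ i : I, Function.Bijective fun x : A i => x - φ i i x
  m2 : ∀ i : I, c i i = 0
  m3 : ∀ i j j' k : I, (φ j k).comp (φ i j) = (φ j' k).comp (φ i j')
  m4 : ∀ i j k : I, φ j k (c i j) = φ k k (c i k - c j k)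

/-- The sum of an affine mesh: the binary operation on the disjoint union of the fibres,
`a * b = c i j + φ i j a + (1 - φ j j) b` for `a ∈ A i`, `b ∈ A j`. -/
def AffineMesh.sum {I : Type*} {A : I → Type*} [∀ i, AddCommGroup (A i)]
    (M : AffineMesh I A) (x y : Σ i, A i) : Σ i, A i :=
  ⟨y.1, M.c x.1 y.1 + M.φ x.1 y.1 x.2 + (y.2 - M.φ y.1 y.1 y.2)⟩

/-- An affine mesh is indecomposable if every fibre `A j` is generated by the
sets `c i j + Im (φ i j)`, `i ∈ I`. -/
def AffineMesh.Indecomposable {I : Type*} {A : I → Type*} [∀ i, AddCommGroup (A i)]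
    (M : AffineMesh I A) : Prop :=
  ∀ j : I, AddSubgroup.closure (⋃ i : I, Set.range fun a : A i => M.c i j + M.φ i j a) = ⊤



section Aux

variable {I : Type*} {A : I → Type*} [∀ i, AddCommGroup (A i)] (M : AffineMesh I A)

/-- The map `1 - φ j j` as an additive endomorphism. -/
def meshT (j : I) : AddMonoid.End (A j) := 1 - (show AddMonoid.End (A j) from M.φ j j)

lemma meshT_apply (j : I) (v : A j) : meshT M j v = v - M.φ j j v := rfl

lemma meshT_pow_coe (j : I) (r : ℕ) :
    ⇑(meshT M j ^ r) = (fun v : A j => v - M.φ j j v)^[r] := by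
  exact hom_coe_pow (fun f : AddMonoid.End (A j) => ⇑f) rfl (fun f g => rfl) (meshT M j) r

lemma mesh_iter (i j : I) (a : A i) (b : A j) (m : ℕ) :
    (fun z => M.sum ⟨i, a⟩ z)^[m] ⟨j, b⟩ =
      ⟨j, (∑ r ∈ Finset.range m, (meshT M j ^ r) (M.c i j + M.φ i j a)) + (meshT M j ^ m) b⟩ := by
  induction m with
  | zero => simp
  | succ m ih =>
    rw [Function.iterate_succ_apply', ih]
    show (⟨j, M.c i j + M.φ i j a + _⟩ : Σ i, A i) = _
    congr 1
    have h1 : (∑ r ∈ Finset.range m, (meshT M j ^ r) (M.c i j + M.φ i j a) + (meshT M j ^ m) b)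
        - M.φ j j (∑ r ∈ Finset.range m, (meshT M j ^ r) (M.c i j + M.φ i j a) + (meshT M j ^ m) b)
        = meshT M j (∑ r ∈ Finset.range m, (meshT M j ^ r) (M.c i j + M.φ i j a) + (meshT M j ^ m) b) := rfl
    rw [h1, map_add, map_sum]
    rw [Finset.sum_range_succ' (fun r => (meshT M j ^ r) (M.c i j + M.φ i j a)) m]
    have hmul : ∀ (f g : AddMonoid.End (A j)) (v : A j), (f * g) v = f (g v) := fun _ _ _ => rfl
    simp only [pow_succ', hmul, pow_zero, AddMonoid.End.one_apply]
    abel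

end Aux


/-- Proposition 7.2: the sum of an indecomposable affine mesh is `n`-symmetric if and
only if `Σ_{r=0}^{n-1} (1 - φ i i)^r = 0` for every `i`. -/
theorem mesh_sum_nsymmetric_iff {I : Type*} [Nonempty I] {A : I → Type*}
    [∀ i, AddCommGroup (A i)] (M : AffineMesh I A) (hind : M.Indecomposable)
    (n : ℕ) (hn : 1 ≤ n) :
    (∀ x y : Σ i, A i, (fun z => M.sum x z)^[n] y = y) ↔
      ∀ i : I, ∀ a : A i,
        (Finset.range n).sum (fun r => (fun b : A i => b - M.φ i i b)^[r] a) = 0 := by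
  have hsum : ∀ (j : I) (v : A j),
      (Finset.range n).sum (fun r => (fun b : A j => b - M.φ j j b)^[r] v)
        = ∑ r ∈ Finset.range n, (meshT M j ^ r) v := by
    intro j v
    refine Finset.sum_congr rfl fun r _ => ?_
    rw [meshT_pow_coe]
  constructor
  · intro H i a
    -- the endomorphism S
    set S : AddMonoid.End (A i) := ∑ r ∈ Finset.range n, meshT M i ^ r with hS
    have hSapp : ∀ v : A i, S v = ∑ r ∈ Finset.range n, (meshT M i ^ r) v := by
      intro v
      rw [hS]
      exact AddMonoidHom.finset_sum_apply _ _ _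
    have key : ∀ (i' : I) (a' : A i'), S (M.c i' i + M.φ i' i a') = 0 := by
      intro i' a'
      have h := H ⟨i', a'⟩ ⟨i, 0⟩
      rw [mesh_iter] at h
      have h2 := eq_of_heq (Sigma.mk.inj_iff.mp h).2
      rw [map_zero] at h2
      rw [hSapp]
      simpa using h2
    have hker : AddSubgroup.closure (⋃ i' : I, Set.range fun a : A i' => M.c i' i + M.φ i' i a)
        ≤ AddMonoidHom.ker S := by
      refine (AddSubgroup.closure_le _).mpr ?_
      intro v hv
      simp only [Set.mem_iUnion, Set.mem_range] at hv
      obtain ⟨i', a', rfl⟩ := hv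
      exact key i' a'
    rw [hind i] at hker
    have : S a = 0 := hker (AddSubgroup.mem_top a)
    rw [hsum, ← hSapp]
    exact this
  · intro h x y
    obtain ⟨i, a⟩ := x
    obtain ⟨j, b⟩ := y
    rw [mesh_iter]
    have hS : ∀ v : A j, ∑ r ∈ Finset.range n, (meshT M j ^ r) v = 0 := by
      intro v
      rw [← hsum]
      exact h j v
    have htel : (meshT M j ^ n) b - b = 0 := by
      have := Finset.sum_range_sub (fun r => (meshT M j ^ r) b) n
      rw [pow_zero, AddMonoid.End.one_apply] at this
      rw [← this]
      have h2 : ∀ r ∈ Finset.range n,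
          (meshT M j ^ (r + 1)) b - (meshT M j ^ r) b
            = (meshT M j ^ r) (meshT M j b) - (meshT M j ^ r) b := by
        intro r _
        rw [pow_succ]
        rfl
      rw [Finset.sum_congr rfl h2, Finset.sum_sub_distrib, hS, hS, sub_zero]
    have hfix : (meshT M j ^ n) b = b := sub_eq_zero.mp htel
    rw [hS, hfix, zero_add]
end
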